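/- arXiv:2404.04656 — 3 statements merged into one kernel-verified Lean document; each statement's English description precedes it below -/
import Mathlib

section
/- For all real numbers a and b, the pointwise direct preference optimization loss is strictly bounded above by the pointwise binary cross-entropy loss: -log σ(a - b) < -log σ(a) - log σ(-b), where σ(z) = 1/(1 + e^{-z}) is the logistic sigmoid function. (Here a plays the role of the implicit reward of the chosen completion and b that of the rejected completion.) -/
open Real

/-- The logistic sigmoid function `σ(z) = 1 / (1 + e^{-z})`. -/
noncomputable def logisticSigmoid (z : ℝ) : ℝ := 1 / (1 + Real.exp (-z))

lemma neg_log_sigmoid (z : ℝ) : -Real.log (logisticSigmoid z) = Real.log (1 + Real.exp (-z)) := by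
  rw [logisticSigmoid, one_div, Real.log_inv, neg_neg]

/-- Pointwise DPO loss is strictly bounded above by pointwise BCE loss:
`-log σ(a - b) < -log σ(a) - log σ(-b)`. -/
theorem dpo_loss_lt_bce_loss (a b : ℝ) :
    -Real.log (logisticSigmoid (a - b)) <
      -Real.log (logisticSigmoid a) - Real.log (logisticSigmoid (-b)) := by
  rw [sub_eq_add_neg (-Real.log (logisticSigmoid a)), neg_log_sigmoid, neg_log_sigmoid, neg_log_sigmoid, neg_neg,
    ← Real.log_mul (by positivity) (by positivity)]
  apply Real.log_lt_log (by positivity)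
  have h1 : Real.exp (-(a - b)) = Real.exp (-a) * Real.exp b := by
    rw [← Real.exp_add]; ring_nf
  rw [h1]
  nlinarith [Real.exp_pos (-a), Real.exp_pos b]
end

section
/- For all real numbers a, b, and δ, the pointwise direct preference optimization loss is strictly bounded above by the δ-shifted pointwise binary cross-entropy loss: -log σ(a - b) < -log σ(a - δ) - log σ(-(b - δ)), where σ(z) = 1/(1 + e^{-z}) is the logistic sigmoid function. -/
open Real

lemma log_sigmoid (z : ℝ) :
    Real.log (logisticSigmoid z) = -Real.log (1 + Real.exp (-z)) := by
  unfold logisticSigmoid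
  rw [one_div, Real.log_inv]

/-- Pointwise DPO loss is strictly bounded above by the `δ`-shifted pointwise
BCE loss: `-log σ(a - b) < -log σ(a - δ) - log σ(-(b - δ))`. -/
theorem dpo_loss_lt_shifted_bce_loss (a b δ : ℝ) :
    -Real.log (logisticSigmoid (a - b)) <
      -Real.log (logisticSigmoid (a - δ)) - Real.log (logisticSigmoid (-(b - δ))) := by
  have h1 : (0:ℝ) < 1 + Real.exp (-(a - b)) := by positivity
  have h2 : (0:ℝ) < 1 + Real.exp (-(a - δ)) := by positivity
  have h3 : (0:ℝ) < 1 + Real.exp (-(-(b - δ))) := by positivity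
  rw [log_sigmoid, log_sigmoid, log_sigmoid, neg_neg, neg_neg, sub_neg_eq_add,
    ← Real.log_mul h2.ne' h3.ne']
  apply Real.log_lt_log h1
  have e1 := Real.exp_pos (-(a - δ))
  have e2 := Real.exp_pos (-(-(b - δ)))
  have key : Real.exp (-(a - δ)) * Real.exp (-(-(b - δ))) = Real.exp (-(a - b)) := by
    rw [← Real.exp_add]; ring_nf
  nlinarith
end

section
/- Let μ be a probability measure on a measurable space, let δ ∈ ℝ, and let r_w, r_l : Ω → ℝ be measurable functions such that -log σ(r_w - r_l), -log σ(r_w - δ), and -log σ(-(r_l - δ)) are all μ-integrable. Then the expected DPO loss is strictly less than the expected δ-shifted binary cross-entropy loss: ∫ (-log σ(r_w - r_l)) dμ < ∫ (-log σ(r_w - δ) - log σ(-(r_l - δ))) dμ, where σ(z) = 1/(1 + e^{-z}) is the logistic sigmoid function. -/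
open Real MeasureTheory

theorem MeasureTheory.integral_lt_integral_of_ae_lt {α : Type*} [MeasurableSpace α]
    {μ : Measure α} [NeZero μ] {f g : α → ℝ} (hf : Integrable f μ) (hg : Integrable g μ)
    (hfg : ∀ᵐ x ∂μ, f x < g x) : ∫ x, f x ∂μ < ∫ x, g x ∂μ := by
  have hle : f ≤ᵐ[μ] g := hfg.mono fun _ hx => hx.le
  refine (integral_mono_ae hf hg hle).lt_of_ne fun heq => ?_
  have hae := (integral_eq_iff_of_ae_le hf hg hle).1 heq
  obtain ⟨x, hlt, hx⟩ := (hfg.and hae).exists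
  exact hlt.ne hx

lemma logisticSigmoid_pos (z : ℝ) : 0 < logisticSigmoid z := by
  unfold logisticSigmoid
  positivity

lemma logisticSigmoid_mul_lt (x y : ℝ) :
    logisticSigmoid x * logisticSigmoid y < logisticSigmoid (x + y) := by
  have ha := Real.exp_pos (-x)
  have hb := Real.exp_pos (-y)
  have hab : Real.exp (-(x + y)) = Real.exp (-x) * Real.exp (-y) := by
    rw [neg_add, Real.exp_add]
  unfold logisticSigmoid
  rw [hab, div_mul_div_comm, one_mul, div_lt_div_iff₀ (by positivity) (by positivity)]
  nlinarith

lemma neg_log_logisticSigmoid_add_lt (x y : ℝ) :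
    -Real.log (logisticSigmoid (x + y)) <
      -Real.log (logisticSigmoid x) - Real.log (logisticSigmoid y) := by
  have hx := logisticSigmoid_pos x
  have hy := logisticSigmoid_pos y
  have := Real.log_lt_log (mul_pos hx hy) (logisticSigmoid_mul_lt x y)
  rw [Real.log_mul hx.ne' hy.ne'] at this
  linarith

theorem expected_dpo_loss_lt_expected_shifted_bce_loss_general
    {Ω : Type*} [MeasurableSpace Ω] (μ : Measure Ω) [IsProbabilityMeasure μ] (δ : ℝ)
    (r_w r_l : Ω → ℝ)
    (h₁ : Integrable (fun ω => -Real.log (logisticSigmoid (r_w ω - r_l ω))) μ)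
    (h₂ : Integrable (fun ω => -Real.log (logisticSigmoid (r_w ω - δ))) μ)
    (h₃ : Integrable (fun ω => -Real.log (logisticSigmoid (-(r_l ω - δ)))) μ) :
    ∫ ω, -Real.log (logisticSigmoid (r_w ω - r_l ω)) ∂μ <
      ∫ ω, (-Real.log (logisticSigmoid (r_w ω - δ)) -
        Real.log (logisticSigmoid (-(r_l ω - δ)))) ∂μ := by
  have hbce : Integrable (fun ω => -Real.log (logisticSigmoid (r_w ω - δ)) -
      Real.log (logisticSigmoid (-(r_l ω - δ)))) μ := by
    simpa only [sub_eq_add_neg, Pi.add_def] using h₂.add h₃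
  refine integral_lt_integral_of_ae_lt h₁ hbce (ae_of_all _ fun ω => ?_)
  have hmargin : r_w ω - δ + -(r_l ω - δ) = r_w ω - r_l ω := by ring
  simpa only [hmargin] using neg_log_logisticSigmoid_add_lt (r_w ω - δ) (-(r_l ω - δ))

/-- For a probability measure `μ`, a shift `δ`, and measurable rewards `r_w, r_l` with
the relevant losses integrable, the expected DPO loss is strictly less than the
expected `δ`-shifted BCE loss. -/
theorem expected_dpo_loss_lt_expected_shifted_bce_loss
    {Ω : Type*} [MeasurableSpace Ω] (μ : Measure Ω) [IsProbabilityMeasure μ] (δ : ℝ)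
    (r_w r_l : Ω → ℝ) (hw : Measurable r_w) (hl : Measurable r_l)
    (h₁ : Integrable (fun ω => -Real.log (logisticSigmoid (r_w ω - r_l ω))) μ)
    (h₂ : Integrable (fun ω => -Real.log (logisticSigmoid (r_w ω - δ))) μ)
    (h₃ : Integrable (fun ω => -Real.log (logisticSigmoid (-(r_l ω - δ)))) μ) :
    ∫ ω, -Real.log (logisticSigmoid (r_w ω - r_l ω)) ∂μ <
      ∫ ω, (-Real.log (logisticSigmoid (r_w ω - δ)) -
        Real.log (logisticSigmoid (-(r_l ω - δ)))) ∂μ :=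
  expected_dpo_loss_lt_expected_shifted_bce_loss_general μ δ r_w r_l h₁ h₂ h₃
end
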